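/- arXiv:2306.01182 — 2 statements merged into one kernel-verified Lean document; each statement's English description precedes it below -/
import Mathlib

section
/- Discrete Gronwall-free energy stability: Let V be a finite-dimensional real inner product space, m, k : V×V→ℝ symmetric bilinear forms with m positive definite and k positive semidefinite, and suppose sequences ξ^n ∈ V satisfy m(∂_{ττ}ξ^n, v) + k(ξ^n, v) = ⟨r^n, v⟩ for all v ∈ V and 1 ≤ n < N, where ⟨·,·⟩ is an inner product on V. Define E(ξ^n, ξ^{n+1}) := m(∂_τξ^{n+1/2}, ∂_τξ^{n+1/2}) + k(ξ̂^{n+1/2}, ξ̂^{n+1/2}) − (τ²/4) k(∂_τξ^{n+1/2}, ∂_τξ^{n+1/2}). Then for all 0 ≤ n < N: E(ξ^n, ξ^{n+1}) = E(ξ^0, ξ^1) + 2 Σ_{j=1}^{n} τ ⟨r^j, ∂_τξ̂^j⟩, where ∂_τξ̂^j = (ξ^{j+1}−ξ^{j-1})/(2τ). -/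
open RealInnerProductSpace

/-- Auxiliary single-step energy identity. -/
theorem stmt_6_step {V : Type*} [NormedAddCommGroup V] [InnerProductSpace ℝ V]
    (m k : LinearMap.BilinForm ℝ V)
    (hmsymm : ∀ x y, m x y = m y x) (hksymm : ∀ x y, k x y = k y x)
    (τ : ℝ) (hτ : 0 < τ) (A B C ρ : V)
    (h : m ((τ^2)⁻¹ • (A - (2:ℝ) • B + C)) (A - C) + k B (A - C) = ⟪ρ, A - C⟫) :
    (m (τ⁻¹ • (A - B)) (τ⁻¹ • (A - B))
        + k ((1/2:ℝ) • (A + B)) ((1/2:ℝ) • (A + B))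
        - τ^2/4 * k (τ⁻¹ • (A - B)) (τ⁻¹ • (A - B)))
    = (m (τ⁻¹ • (B - C)) (τ⁻¹ • (B - C))
        + k ((1/2:ℝ) • (B + C)) ((1/2:ℝ) • (B + C))
        - τ^2/4 * k (τ⁻¹ • (B - C)) (τ⁻¹ • (B - C)))
      + 2 * (τ * ⟪ρ, (2*τ)⁻¹ • (A - C)⟫) := by
  have ht : τ * τ⁻¹ = 1 := mul_inv_cancel₀ (ne_of_gt hτ)
  simp only [map_sub, map_add, map_smul, LinearMap.sub_apply, LinearMap.add_apply,
    LinearMap.smul_apply, smul_eq_mul, inner_sub_right, real_inner_smul_right] at h ⊢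
  linear_combination h + (τ⁻¹)^2 * (hmsymm B A) + (τ⁻¹)^2 * (hmsymm C B)
    - (τ⁻¹)^2 * (hmsymm C A) + (1/2) * hksymm A B + (1/2) * hksymm B C
    + ((τ*τ⁻¹+1) * ((k B B - k B C - k C B + k C C - (k A A - k A B - k B A + k B B))/4)
        - (⟪ρ, A⟫ - ⟪ρ, C⟫)) * ht

/-- discrete energy identity (σ = 0 case of the discrete stability lemma). -/
theorem stmt_6 {V : Type*} [NormedAddCommGroup V] [InnerProductSpace ℝ V]
    [FiniteDimensional ℝ V]
    (m k : LinearMap.BilinForm ℝ V)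
    (hmsymm : ∀ x y, m x y = m y x) (hksymm : ∀ x y, k x y = k y x)
    (hmpos : ∀ v : V, v ≠ 0 → 0 < m v v) (hkpos : ∀ v : V, 0 ≤ k v v)
    (τ : ℝ) (hτ : 0 < τ) (N : ℕ) (ξ r : ℕ → V)
    (hrec : ∀ n, 1 ≤ n → n < N → ∀ v : V,
      m ((τ^2)⁻¹ • (ξ (n+1) - (2:ℝ) • ξ n + ξ (n-1))) v + k (ξ n) v = ⟪r n, v⟫) :
    ∀ n, n < N →
      (m (τ⁻¹ • (ξ (n+1) - ξ n)) (τ⁻¹ • (ξ (n+1) - ξ n))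
        + k ((1/2:ℝ) • (ξ (n+1) + ξ n)) ((1/2:ℝ) • (ξ (n+1) + ξ n))
        - τ^2/4 * k (τ⁻¹ • (ξ (n+1) - ξ n)) (τ⁻¹ • (ξ (n+1) - ξ n)))
      = (m (τ⁻¹ • (ξ 1 - ξ 0)) (τ⁻¹ • (ξ 1 - ξ 0))
          + k ((1/2:ℝ) • (ξ 1 + ξ 0)) ((1/2:ℝ) • (ξ 1 + ξ 0))
          - τ^2/4 * k (τ⁻¹ • (ξ 1 - ξ 0)) (τ⁻¹ • (ξ 1 - ξ 0)))
        + 2 * ∑ j ∈ Finset.Icc 1 n, τ * ⟪r j, (2*τ)⁻¹ • (ξ (j+1) - ξ (j-1))⟫ := by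
  intro n hn
  induction n with
  | zero => simp
  | succ n ih =>
    have hn' : n < N := Nat.lt_of_succ_lt hn
    have ih' := ih hn'
    have h := hrec (n+1) (by omega) hn (ξ (n+2) - ξ n)
    simp only [Nat.add_sub_cancel] at h
    have key := stmt_6_step m k hmsymm hksymm τ hτ (ξ (n+2)) (ξ (n+1)) (ξ n) (r (n+1)) h
    rw [Finset.sum_Icc_succ_top (by omega : 1 ≤ n+1)]
    simp only [Nat.add_sub_cancel]
    linear_combination ih' + key
end

section
/- Energy dissipation with damping (matrix version): Let M, B, K ∈ ℝ^{m×m} with M symmetric positive definite, B symmetric positive semidefinite, K symmetric positive semidefinite, and suppose (E^n) satisfies M ∂_{ττ}E^n + B ∂_τÊ^n + K E^n = 0, where ∂_τÊ^n = (E^{n+1}−E^{n-1})/(2τ). Then the discrete energy E_n := dₙᵀMdₙ + aₙᵀKaₙ − (τ²/4)dₙᵀKdₙ (with dₙ = (E^{n+1}−E^n)/τ, aₙ = (E^{n+1}+E^n)/2) satisfies E_n + 2τ Σ_{k=1}^{n} (∂_τÊ^k)ᵀ B (∂_τÊ^k) = E_0, in particular E_n ≤ E_0 is nonincreasing. -/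
/-!
Write `u = E^{n+1}`, `v = E^n`, `w = E^{n-1}`. For symmetric `K` the energy of the step from `v`
to `u` is `dᵀ M d + uᵀ K v` with `d = (u - v)/τ`, because
`((u+v)/2)ᵀ K ((u+v)/2) - ((u-v)/2)ᵀ K ((u-v)/2) = uᵀ K v`. Dotting the scheme with `u - w` then
turns the `M` term into `|u - v|²_M - |v - w|²_M` (since `u - w = (u - v) + (v - w)` and
`u - 2v + w = (u - v) - (v - w)`) and the `K` term into `uᵀ K v - vᵀ K w`, so one step lowers the
energy by exactly `2τ (∂_τÊ^n)ᵀ B (∂_τÊ^n)`; the claim follows by telescoping.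
-/

open Matrix Finset

theorem Matrix.IsSymm.dotProduct_mulVec_comm {ι R : Type*} [Fintype ι] [CommSemiring R]
    {A : Matrix ι ι R} (hA : A.IsSymm) (x y : ι → R) : x ⬝ᵥ A *ᵥ y = y ⬝ᵥ A *ᵥ x := by
  rw [dotProduct_mulVec, ← hA.eq, vecMul_transpose, dotProduct_comm, hA.eq]

theorem Matrix.IsSymm.add_dotProduct_mulVec_sub {ι R : Type*} [Fintype ι] [CommRing R]
    {A : Matrix ι ι R} (hA : A.IsSymm) (x y : ι → R) :
    (x + y) ⬝ᵥ A *ᵥ (x - y) = x ⬝ᵥ A *ᵥ x - y ⬝ᵥ A *ᵥ y := by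
  simp only [mulVec_sub, dotProduct_sub, add_dotProduct, hA.dotProduct_mulVec_comm y x]
  ring

theorem add_sum_Icc_one_eq_of_add_eq {G : Type*} [AddCommMonoid G] {f g : ℕ → G}
    (h : ∀ j, f (j + 1) + g (j + 1) = f j) (n : ℕ) :
    f n + ∑ k ∈ Icc 1 n, g k = f 0 := by
  induction n with
  | zero => simp
  | succ n ih => rw [sum_Icc_succ_top (by omega), ← add_assoc, add_right_comm, h, ih]

section LeapfrogEnergy

variable {ι R : Type*} [Fintype ι] [Field R]

/-- `E_n` with `u = E^{n+1}` and `v = E^n`. -/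
def leapfrogEnergy (M K : Matrix ι ι R) (τ : R) (u v : ι → R) : R :=
  (τ⁻¹ • (u - v)) ⬝ᵥ M *ᵥ (τ⁻¹ • (u - v)) + ((1 / 2 : R) • (u + v)) ⬝ᵥ K *ᵥ ((1 / 2 : R) • (u + v))
    - τ ^ 2 / 4 * ((τ⁻¹ • (u - v)) ⬝ᵥ K *ᵥ (τ⁻¹ • (u - v)))

variable [CharZero R] {M B K : Matrix ι ι R} {τ : R}

theorem leapfrogEnergy_eq (hK : K.IsSymm) (hτ : τ ≠ 0) (u v : ι → R) :
    leapfrogEnergy M K τ u v = (τ⁻¹ • (u - v)) ⬝ᵥ M *ᵥ (τ⁻¹ • (u - v)) + u ⬝ᵥ K *ᵥ v := by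
  have hvu := hK.dotProduct_mulVec_comm v u
  simp only [leapfrogEnergy, mulVec_smul, dotProduct_smul, smul_dotProduct, smul_eq_mul,
    mulVec_add, mulVec_sub, dotProduct_add, dotProduct_sub, add_dotProduct, sub_dotProduct]
  field_simp
  linear_combination 8 * τ ^ 2 * hvu

theorem leapfrogEnergy_add_damping_eq (hM : M.IsSymm) (hK : K.IsSymm) (hτ : τ ≠ 0)
    (u v w : ι → R)
    (hscheme : M *ᵥ ((τ ^ 2)⁻¹ • (u - (2 : R) • v + w)) + B *ᵥ ((2 * τ)⁻¹ • (u - w))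
      + K *ᵥ v = 0) :
    leapfrogEnergy M K τ u v
        + 2 * τ * (((2 * τ)⁻¹ • (u - w)) ⬝ᵥ B *ᵥ ((2 * τ)⁻¹ • (u - w)))
      = leapfrogEnergy M K τ v w := by
  have htested := congrArg ((u - w) ⬝ᵥ ·) hscheme
  simp only [dotProduct_add, dotProduct_zero] at htested
  have hMterm : (u - w) ⬝ᵥ M *ᵥ ((τ ^ 2)⁻¹ • (u - (2 : R) • v + w))
      = (τ⁻¹ • (u - v)) ⬝ᵥ M *ᵥ (τ⁻¹ • (u - v)) - (τ⁻¹ • (v - w)) ⬝ᵥ M *ᵥ (τ⁻¹ • (v - w)) := by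
    have hsplit : u - w = (u - v) + (v - w) ∧ u - (2 : R) • v + w = (u - v) - (v - w) := by
      constructor <;> module
    rw [hsplit.1, hsplit.2]
    simp only [mulVec_smul, dotProduct_smul, smul_dotProduct, smul_eq_mul,
      hM.add_dotProduct_mulVec_sub]
    ring
  have hBterm : (u - w) ⬝ᵥ B *ᵥ ((2 * τ)⁻¹ • (u - w))
      = 2 * τ * (((2 * τ)⁻¹ • (u - w)) ⬝ᵥ B *ᵥ ((2 * τ)⁻¹ • (u - w))) := by
    simp only [mulVec_smul, dotProduct_smul, smul_dotProduct, smul_eq_mul]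
    field_simp
  have hKterm : (u - w) ⬝ᵥ K *ᵥ v = u ⬝ᵥ K *ᵥ v - v ⬝ᵥ K *ᵥ w := by
    rw [sub_dotProduct, hK.dotProduct_mulVec_comm w v]
  rw [leapfrogEnergy_eq hK hτ, leapfrogEnergy_eq hK hτ]
  rw [hMterm, hBterm, hKterm] at htested
  linear_combination htested

end LeapfrogEnergy

/-- discrete energy dissipation for the damped leapfrog scheme. -/
theorem stmt_19 {m : ℕ} (τ : ℝ) (hτ : 0 < τ)
    (M B K : Matrix (Fin m) (Fin m) ℝ)
    (hM : M.PosDef) (hB : B.PosSemidef) (hK : K.PosSemidef)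
    (E : ℕ → Fin m → ℝ)
    (hrec : ∀ n, 1 ≤ n →
      M.mulVec ((τ^2)⁻¹ • (E (n+1) - (2:ℝ) • E n + E (n-1)))
        + B.mulVec ((2*τ)⁻¹ • (E (n+1) - E (n-1))) + K.mulVec (E n) = 0) :
    ∀ n : ℕ,
      let d := fun j : ℕ => τ⁻¹ • (E (j+1) - E j)
      let a := fun j : ℕ => (1/2 : ℝ) • (E (j+1) + E j)
      let dhat := fun j : ℕ => (2*τ)⁻¹ • (E (j+1) - E (j-1))
      let En := fun j : ℕ =>
        d j ⬝ᵥ M.mulVec (d j) + a j ⬝ᵥ K.mulVec (a j) - τ^2/4 * (d j ⬝ᵥ K.mulVec (d j))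
      (En n + 2*τ * ∑ k ∈ Finset.Icc 1 n, dhat k ⬝ᵥ B.mulVec (dhat k) = En 0) ∧
      En n ≤ En 0 := by
  intro n d a dhat En
  have hstep : ∀ j, En (j + 1) + 2 * τ * (dhat (j + 1) ⬝ᵥ B *ᵥ dhat (j + 1)) = En j := fun j =>
    leapfrogEnergy_add_damping_eq (isHermitian_iff_isSymm.mp hM.isHermitian)
      (isHermitian_iff_isSymm.mp hK.isHermitian) hτ.ne' _ _ _ (hrec (j + 1) (by omega))
  have henergy : En n + 2 * τ * ∑ k ∈ Icc 1 n, dhat k ⬝ᵥ B *ᵥ dhat k = En 0 := by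
    rw [mul_sum]
    exact add_sum_Icc_one_eq_of_add_eq hstep n
  have hdamping : 0 ≤ 2 * τ * ∑ k ∈ Icc 1 n, dhat k ⬝ᵥ B *ᵥ dhat k :=
    mul_nonneg (by positivity) (sum_nonneg fun k _ => by
      simpa only [star_trivial] using hB.dotProduct_mulVec_nonneg (dhat k))
  exact ⟨henergy, by linarith⟩
end
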